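/- Let B be a skew-symmetrizable n×n integer matrix and let t be a vertex reached from the initial vertex t_0 by a path (i_1,…,i_m). Then F^{−B;t_0}_t = F^{B;t_0}_t, where F^{−B;t_0}_t denotes the F-matrix for the initial matrix −B along the same path. -/

import Mathlib

open Matrix

section Defs

variable {ι : Type} [Fintype ι] [DecidableEq ι]
variable {R : Type} [CommRing R] [LinearOrder R] [IsStrictOrderedRing R]

/-- Entrywise positive part `[A]₊`. -/
def matPos (A : Matrix ι ι R) : Matrix ι ι R := fun i j => max (A i j) 0

/-- `A^{k•}`: the matrix keeping only the `k`-th row of `A`. -/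
def rowSel (k : ι) (A : Matrix ι ι R) : Matrix ι ι R := fun i j => if i = k then A i j else 0

/-- `A^{•k}`: the matrix keeping only the `k`-th column of `A`. -/
def colSel (k : ι) (A : Matrix ι ι R) : Matrix ι ι R := fun i j => if j = k then A i j else 0

/-- Entrywise maximum of two matrices. -/
def emax (A B : Matrix ι ι R) : Matrix ι ι R := fun i j => max (A i j) (B i j)

/-- `J_ℓ`: identity matrix with `(ℓ,ℓ)` entry replaced by `-1`. -/
def Jmat (ℓ : ι) : Matrix ι ι R := Matrix.diagonal fun i => if i = ℓ then -1 else 1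

/-- Matrix mutation `μ_k(B)` in direction `k`. -/
def mutate (B : Matrix ι ι R) (k : ι) : Matrix ι ι R := fun i j =>
  if i = k ∨ j = k then -(B i j)
  else B i j + max (B i k) 0 * B k j + B i k * max (-(B k j)) 0

/-- The data `(B_t, C_t, G_t, F_t)` attached to a vertex. -/
structure SeedData (ι R : Type) where
  B : Matrix ι ι R
  C : Matrix ι ι R
  G : Matrix ι ι R
  F : Matrix ι ι R

/-- One final-seed mutation step in direction `ℓ` (with initial exchange matrix `B0`). -/
def seedStep (B0 : Matrix ι ι R) (s : SeedData ι R) (ℓ : ι) : SeedData ι R where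
  B := mutate s.B ℓ
  C := s.C * (Jmat ℓ + rowSel ℓ (matPos s.B)) + colSel ℓ (matPos (-s.C)) * s.B
  G := s.G * (Jmat ℓ + colSel ℓ (matPos s.B)) - B0 * colSel ℓ (matPos s.C)
  F := s.F * Jmat ℓ + emax (colSel ℓ (matPos s.C) + s.F * colSel ℓ (matPos s.B))
      (colSel ℓ (matPos (-s.C)) + s.F * colSel ℓ (matPos (-s.B)))

/-- The seed data at the endpoint of the path `p` starting from the initial vertex. -/
def seedOf (B0 : Matrix ι ι R) (p : List ι) : SeedData ι R :=
  p.foldl (seedStep B0) ⟨B0, 1, 1, 0⟩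

/-- The exchange matrix `B_t` at the end of the path `p`. -/
def Bpath (B : Matrix ι ι R) (p : List ι) : Matrix ι ι R := (seedOf B p).B

/-- The `C`-matrix `C^{B;t_0}_t` at the end of the path `p`. -/
def Cmat (B : Matrix ι ι R) (p : List ι) : Matrix ι ι R := (seedOf B p).C

/-- The `G`-matrix `G^{B;t_0}_t` at the end of the path `p`. -/
def Gmat (B : Matrix ι ι R) (p : List ι) : Matrix ι ι R := (seedOf B p).G

/-- The `F`-matrix `F^{B;t_0}_t` at the end of the path `p`. -/
def Fmat (B : Matrix ι ι R) (p : List ι) : Matrix ι ι R := (seedOf B p).F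

/-- `B` is skew-symmetrizable: `DB` is skew-symmetric for some positive diagonal `D`. -/
def IsSkewSymmetrizable (B : Matrix ι ι ℤ) : Prop :=
  ∃ d : ι → ℤ, (∀ i, 0 < d i) ∧ (Matrix.diagonal d * B)ᵀ = -(Matrix.diagonal d * B)

/-- Column sign-coherence: every column is nonzero and has all entries of one sign. -/
def ColSignCoherent (A : Matrix ι ι ℤ) : Prop :=
  ∀ j, (∃ i, A i j ≠ 0) ∧ ((∀ i, 0 ≤ A i j) ∨ (∀ i, A i j ≤ 0))

/-- Row sign-coherence: every row is nonzero and has all entries of one sign. -/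
def RowSignCoherent (A : Matrix ι ι ℤ) : Prop :=
  ∀ i, (∃ j, A i j ≠ 0) ∧ ((∀ j, 0 ≤ A i j) ∨ (∀ j, A i j ≤ 0))

/-- `ε` is the column sign `ε_{•ℓ}(A)` of the (sign-coherent, nonzero) `ℓ`-th column of `A`. -/
def IsColSign (ε : ℤ) (A : Matrix ι ι ℤ) (ℓ : ι) : Prop :=
  (ε = 1 ∨ ε = -1) ∧ (∃ i, A i ℓ ≠ 0) ∧ ∀ i, 0 ≤ ε * A i ℓ

/-- `ε` is the row sign `ε_{k•}(A)` of the (sign-coherent, nonzero) `k`-th row of `A`. -/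
def IsRowSign (ε : ℤ) (A : Matrix ι ι ℤ) (k : ι) : Prop :=
  (ε = 1 ∨ ε = -1) ∧ (∃ j, A k j ≠ 0) ∧ ∀ j, 0 ≤ ε * A k j

/-- Sign-coherence of `C`-matrices: for every skew-symmetrizable initial integer matrix and
every path, the associated `C`-matrix is column sign-coherent. -/
def SignCoherenceOfC : Prop :=
  ∀ (κ : Type) [Fintype κ] [DecidableEq κ], ∀ B : Matrix κ κ ℤ,
    IsSkewSymmetrizable B → ∀ p : List κ, ColSignCoherent (Cmat B p)

/-- The principal extension `B̄ = [[B, -I],[I, O]]` of `B`, on the index type `Fin n ⊕ Fin n`. -/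
def pext {n : ℕ} (B : Matrix (Fin n) (Fin n) ℤ) :
    Matrix (Fin n ⊕ Fin n) (Fin n ⊕ Fin n) ℤ :=
  Matrix.fromBlocks B (-1) 1 0

noncomputable section FPolys

/-- The ambient field of rational functions `ℚ(y_i : i ∈ ι)` (fraction field of `ℤ[y_i]`). -/
abbrev FField (ι : Type) := FractionRing (MvPolynomial ι ℤ)

/-- The variable `y_i` inside the fraction field. -/
def yvar (i : ι) : FField ι := algebraMap (MvPolynomial ι ℤ) (FField ι) (MvPolynomial.X i)

/-- One mutation step for the triple `(B_t, C_t, (F_{j;t})_j)`. -/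
def fpolyStep (s : Matrix ι ι ℤ × Matrix ι ι ℤ × (ι → FField ι)) (ℓ : ι) :
    Matrix ι ι ℤ × Matrix ι ι ℤ × (ι → FField ι) :=
  ⟨mutate s.1 ℓ,
   s.2.1 * (Jmat ℓ + rowSel ℓ (matPos s.1)) + colSel ℓ (matPos (-s.2.1)) * s.1,
   fun j => if j = ℓ then
     (s.2.2 ℓ)⁻¹ *
       ((∏ i, yvar i ^ (max (s.2.1 i ℓ) 0).toNat) * (∏ i, s.2.2 i ^ (max (s.1 i ℓ) 0).toNat)
        + (∏ i, yvar i ^ (max (-(s.2.1 i ℓ)) 0).toNat) *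
            (∏ i, s.2.2 i ^ (max (-(s.1 i ℓ)) 0).toNat))
   else s.2.2 j⟩

/-- The `F`-polynomial `F^{B;t_0}_{j;t}` (as an element of the field of rational functions)
at the end of the path `p`. -/
def Fpoly (B : Matrix ι ι ℤ) (p : List ι) : ι → FField ι :=
  (p.foldl fpolyStep ⟨B, 1, fun _ => 1⟩).2.2

/-- The polynomial representing an element of the fraction field (when it is a polynomial). -/
def polyOf (x : FField ι) : MvPolynomial ι ℤ := by
  classical exact
    if h : ∃ q : MvPolynomial ι ℤ, algebraMap (MvPolynomial ι ℤ) (FField ι) q = x then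
      h.choose else 0

/-- The `H`-matrix `H^{B;t_0}_t`: `h_{ij;t}` is the minimum over exponent vectors `a` in the
support of `F^{B;t_0}_{j;t}` of `-a_i + ∑_{l ≠ i} [-b_{il}]₊ a_l`. -/
def Hmat (B : Matrix ι ι ℤ) (p : List ι) : Matrix ι ι ℤ := fun i j =>
  if h : (polyOf (Fpoly B p j)).support.Nonempty then
    (polyOf (Fpoly B p j)).support.inf' h
      (fun a => -(a i : ℤ) + ∑ l ∈ Finset.univ.erase i, max (-(B i l)) 0 * (a l : ℤ))
  else 0

end FPolys

/-- The embedding `ℚ(y_1,…,y_n) → ℚ(y_1,…,y_{2n})` sending `y_i` to `y_i`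
(the second batch of variables indexed by the right summand). -/
noncomputable def embK (n : ℕ) : FField (Fin n) →+* FField (Fin n ⊕ Fin n) :=
  IsFractionRing.lift
    (g := (algebraMap (MvPolynomial (Fin n ⊕ Fin n) ℤ) (FField (Fin n ⊕ Fin n))).comp
      (MvPolynomial.rename (Sum.inl : Fin n → Fin n ⊕ Fin n)).toRingHom)
    (by
      intro a b hab
      simp only [RingHom.coe_comp, Function.comp_apply, AlgHom.toRingHom_eq_coe,
        RingHom.coe_coe] at hab
      exact MvPolynomial.rename_injective _ Sum.inl_injective
        (IsFractionRing.injective (MvPolynomial (Fin n ⊕ Fin n) ℤ)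
          (FField (Fin n ⊕ Fin n)) hab))

/-- `D⁻¹ Cᵀ D` over `ℚ`, for the positive diagonal skew-symmetrizer `D = diagonal d`. -/
noncomputable def dCd {n : ℕ} (d : Fin n → ℤ) (C : Matrix (Fin n) (Fin n) ℤ) :
    Matrix (Fin n) (Fin n) ℚ :=
  (Matrix.diagonal fun i => (d i : ℚ))⁻¹ * (C.map (Int.cast : ℤ → ℚ))ᵀ *
    Matrix.diagonal fun i => (d i : ℚ)

end Defs

/-!
Along every path the seed data of `-B` is determined by that of `B`:
`B_t^{-B} = -B_t`, `C_t^{-B} = C_t + F_t B_t` and `F_t^{-B} = F_t`. This holds at `t_0` and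
survives each mutation in direction `ℓ`. Writing `c = c_{iℓ}`, `P = (F_t [B_t]_+)_{iℓ}` and
`N = (F_t [-B_t]_+)_{iℓ}`, so that `(F_t B_t)_{iℓ} = P - N`, the maxima defining the new
`ℓ`-th column of `F` agree for both initial matrices, and the `C`-recursions then agree by a
piecewise-linear identity in `c, P, N`. Skew-symmetrizability enters only through
`(B_t)_{ℓℓ} = 0`, and it is preserved by mutation.
-/

section MatrixEntries

variable {ι R : Type} [Fintype ι] [DecidableEq ι] [CommRing R]

lemma mul_Jmat_apply (A : Matrix ι ι R) (ℓ i j : ι) :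
    (A * (Jmat ℓ : Matrix ι ι R)) i j = if j = ℓ then -A i j else A i j := by
  rw [Jmat, mul_diagonal]
  split_ifs <;> simp

lemma mul_rowSel_apply (A X : Matrix ι ι R) (ℓ i j : ι) :
    (A * rowSel ℓ X) i j = A i ℓ * X ℓ j := by
  simp [Matrix.mul_apply, rowSel]

lemma colSel_mul_apply (X A : Matrix ι ι R) (ℓ i j : ι) :
    (colSel ℓ X * A) i j = X i ℓ * A ℓ j := by
  simp [Matrix.mul_apply, colSel]

lemma mul_colSel_apply (A X : Matrix ι ι R) (ℓ i j : ι) :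
    (A * colSel ℓ X) i j = if j = ℓ then (A * X) i ℓ else 0 := by
  split_ifs with h <;> simp [Matrix.mul_apply, colSel, h]

lemma mul_apply_eq_of_apply_eq_of_ne_right (X A A' : Matrix ι ι R) (ℓ i j : ι)
    (hA : ∀ k, k ≠ ℓ → A' k j = A k j) :
    (X * A') i j = (X * A) i j + X i ℓ * (A' ℓ j - A ℓ j) := by
  have hsummand : ∀ k, X i k * A' k j
      = X i k * A k j + if k = ℓ then X i ℓ * (A' ℓ j - A ℓ j) else 0 := by
    intro k
    split_ifs with hk
    · subst hk; ring
    · rw [hA k hk, add_zero]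
  simp only [Matrix.mul_apply, hsummand, Finset.sum_add_distrib, Finset.sum_ite_eq',
    Finset.mem_univ, if_true]

lemma mul_apply_eq_of_apply_eq_of_ne_left (A A' X : Matrix ι ι R) (ℓ i j : ι)
    (hA : ∀ k, k ≠ ℓ → A' i k = A i k) :
    (A' * X) i j = (A * X) i j + (A' i ℓ - A i ℓ) * X ℓ j := by
  rw [← transpose_apply (A' * X), ← transpose_apply (A * X), transpose_mul, transpose_mul,
    mul_apply_eq_of_apply_eq_of_ne_right Xᵀ Aᵀ A'ᵀ ℓ j i hA]
  simp only [transpose_apply]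
  ring

end MatrixEntries

lemma mutate_apply_left {ι R : Type} [DecidableEq ι] [CommRing R] [LinearOrder R]
    (B : Matrix ι ι R) (ℓ j : ι) : mutate B ℓ ℓ j = -B ℓ j := by
  simp [mutate]

lemma mutate_apply_right {ι R : Type} [DecidableEq ι] [CommRing R] [LinearOrder R]
    (B : Matrix ι ι R) (ℓ i : ι) : mutate B ℓ i ℓ = -B i ℓ := by
  simp [mutate]

structure IsSkewSymmetrizer {ι R : Type} [CommRing R] [PartialOrder R] (d : ι → R)
    (B : Matrix ι ι R) : Prop where
  pos : ∀ i, 0 < d i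
  mul_apply_eq_neg : ∀ i j, d i * B i j = -(d j * B j i)

section OrderedRing

variable {ι R : Type} [CommRing R] [LinearOrder R] [IsStrictOrderedRing R]

lemma max_neg_zero_eq_max_zero_sub (x : R) : max (-x) 0 = max x 0 - x := by
  linear_combination (max_zero_sub_max_neg_zero_eq_self x).symm

lemma matPos_sub_matPos_neg (A : Matrix ι ι R) : matPos A - matPos (-A) = A := by
  ext i j
  exact max_zero_sub_max_neg_zero_eq_self (A i j)

lemma mul_matPos_sub_mul_matPos_neg_apply [Fintype ι] (F A : Matrix ι ι R) (i j : ι) :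
    (F * matPos A) i j - (F * matPos (-A)) i j = (F * A) i j := by
  rw [← Matrix.sub_apply, ← Matrix.mul_sub, matPos_sub_matPos_neg]

lemma mutate_neg [DecidableEq ι] (B : Matrix ι ι R) (ℓ : ι) :
    mutate (-B) ℓ = -mutate B ℓ := by
  funext i j
  simp only [mutate, Matrix.neg_apply, neg_neg]
  split_ifs
  · exact (neg_neg _).symm
  · rw [max_neg_zero_eq_max_zero_sub, max_neg_zero_eq_max_zero_sub]; ring

namespace IsSkewSymmetrizer

variable {d : ι → R} {B : Matrix ι ι R}

lemma apply_self_eq_zero (h : IsSkewSymmetrizer d B) (i : ι) : B i i = 0 := by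
  have h2 : d i * B i i = 0 := by linarith [h.mul_apply_eq_neg i i]
  exact (mul_eq_zero.mp h2).resolve_left (h.pos i).ne'

lemma mutate [DecidableEq ι] (h : IsSkewSymmetrizer d B) (ℓ : ι) :
    IsSkewSymmetrizer d (mutate B ℓ) := by
  refine ⟨h.pos, fun i j => ?_⟩
  have hs := h.mul_apply_eq_neg
  have hpos : ∀ x y, d x * max (B x y) 0 = d y * max (-B y x) 0 := by
    intro x y
    rw [mul_max_of_nonneg _ _ (h.pos x).le, mul_max_of_nonneg _ _ (h.pos y).le,
      mul_zero, mul_zero, hs x y, mul_neg]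
  simp only [_root_.mutate]
  by_cases hij : i = ℓ ∨ j = ℓ
  · rw [if_pos hij, if_pos hij.symm]
    linarith [hs i j]
  · rw [if_neg hij, if_neg (fun h' => hij h'.symm)]
    linear_combination hs i j + B ℓ j * hpos i ℓ + max (-B ℓ j) 0 * hs i ℓ
      + B ℓ i * hpos j ℓ + max (-B ℓ i) 0 * hs j ℓ

end IsSkewSymmetrizer

end OrderedRing

section SeedStep

variable {ι R : Type} [Fintype ι] [DecidableEq ι] [CommRing R] [LinearOrder R]

lemma mul_mutate_apply_of_ne (F B : Matrix ι ι R) {ℓ j : ι}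
    (hℓ : B ℓ ℓ = 0) (hj : j ≠ ℓ) (i : ι) :
    (F * mutate B ℓ) i j = (F * B) i j + (F * matPos B) i ℓ * B ℓ j
      + (F * B) i ℓ * max (-B ℓ j) 0 - 2 * F i ℓ * B ℓ j := by
  set U : Matrix ι ι R :=
    Matrix.of fun k j => B k j + max (B k ℓ) 0 * B ℓ j + B k ℓ * max (-B ℓ j) 0
  have hU : (F * U) i j = (F * B) i j + (F * matPos B) i ℓ * B ℓ j
      + (F * B) i ℓ * max (-B ℓ j) 0 := by
    simp only [U, Matrix.mul_apply, Matrix.of_apply, matPos, mul_add, Finset.sum_add_distrib,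
      Finset.sum_mul, mul_assoc]
  rw [mul_apply_eq_of_apply_eq_of_ne_right F U (mutate B ℓ) ℓ i j, hU, mutate_apply_left]
  · simp only [U, of_apply, hℓ, max_self, zero_mul, add_zero]
    ring
  · intro k hk
    simp [mutate, U, hk, hj]

lemma seedStep_C_apply (B0 : Matrix ι ι R) (s : SeedData ι R) (ℓ i j : ι) :
    (seedStep B0 s ℓ).C i j = (if j = ℓ then -s.C i j else s.C i j)
      + s.C i ℓ * max (s.B ℓ j) 0 + max (-s.C i ℓ) 0 * s.B ℓ j := by
  simp only [seedStep, Matrix.mul_add, Matrix.add_apply, mul_Jmat_apply, mul_rowSel_apply,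
    colSel_mul_apply, matPos, Matrix.neg_apply]

lemma seedStep_F_apply (B0 : Matrix ι ι R) (s : SeedData ι R) (ℓ i k : ι) :
    (seedStep B0 s ℓ).F i k = if k = ℓ then
      -s.F i ℓ + max (max (s.C i ℓ) 0 + (s.F * matPos s.B) i ℓ)
        (max (-s.C i ℓ) 0 + (s.F * matPos (-s.B)) i ℓ)
    else s.F i k := by
  simp only [seedStep, Matrix.add_apply, emax, mul_Jmat_apply, mul_colSel_apply]
  split_ifs with hk
  · subst hk; simp [colSel, matPos]
  · simp [colSel, hk]

end SeedStep

section NegInitialMatrix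

variable {ι R : Type} [Fintype ι] [DecidableEq ι] [CommRing R] [LinearOrder R]
  [IsStrictOrderedRing R]

structure SeedData.NegRel (s s' : SeedData ι R) : Prop where
  B_eq : s'.B = -s.B
  C_eq : s'.C = s.C + s.F * s.B
  F_eq : s'.F = s.F

namespace SeedData.NegRel

variable {s s' : SeedData ι R}

lemma seedStep_F (h : s.NegRel s') (B0 B0' : Matrix ι ι R) (ℓ : ι) :
    (seedStep B0' s' ℓ).F = (seedStep B0 s ℓ).F := by
  ext i k
  rw [seedStep_F_apply, seedStep_F_apply, h.B_eq, h.C_eq, h.F_eq, neg_neg, Matrix.add_apply,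
    ← mul_matPos_sub_mul_matPos_neg_apply]
  split_ifs
  · generalize s.C i ℓ = c, (s.F * matPos s.B) i ℓ = P, (s.F * matPos (-s.B)) i ℓ = N
    -- both sides are the maximum of `c + P`, `P`, `N - c` and `N`
    simp only [max_def]
    split_ifs <;> linarith
  · rfl

lemma seedStep_C (h : s.NegRel s') {ℓ : ι} (hℓ : s.B ℓ ℓ = 0) (B0 B0' : Matrix ι ι R) :
    (seedStep B0' s' ℓ).C
      = (seedStep B0 s ℓ).C + (seedStep B0 s ℓ).F * (seedStep B0 s ℓ).B := by
  ext i j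
  have hF := mul_apply_eq_of_apply_eq_of_ne_left s.F (seedStep B0 s ℓ).F (mutate s.B ℓ) ℓ i j
    (fun k hk => by rw [seedStep_F_apply, if_neg hk])
  rw [Matrix.add_apply, seedStep_C_apply, seedStep_C_apply, show (seedStep B0 s ℓ).B
    = mutate s.B ℓ from rfl, hF, seedStep_F_apply, if_pos rfl, h.B_eq, h.C_eq]
  simp only [Matrix.add_apply, Matrix.neg_apply]
  have hFB := mul_matPos_sub_mul_matPos_neg_apply s.F s.B i ℓ
  split_ifs with hj
  · subst hj
    have hmul : (s.F * mutate s.B j) i j = -(s.F * s.B) i j := by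
      simp [Matrix.mul_apply, mutate_apply_right]
    rw [hmul, mutate_apply_left, hℓ]
    simp only [neg_zero, max_self, mul_zero, add_zero]
    ring
  · rw [mul_mutate_apply_of_ne s.F s.B hℓ hj, mutate_apply_left, ← hFB,
      max_neg_zero_eq_max_zero_sub (s.B ℓ j)]
    generalize s.C i ℓ = c, (s.F * matPos s.B) i ℓ = P, (s.F * matPos (-s.B)) i ℓ = N,
      s.B ℓ j = b
    have hM : max (max c 0 + P) (max (-c) 0 + N) = max c 0 + P + max (-(c + (P - N))) 0 := by
      simp only [max_def]
      split_ifs <;> linarith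
    rw [hM, max_neg_zero_eq_max_zero_sub (c + (P - N)), max_neg_zero_eq_max_zero_sub c]
    ring

lemma seedStep (h : s.NegRel s') {ℓ : ι} (hℓ : s.B ℓ ℓ = 0) (B0 B0' : Matrix ι ι R) :
    (_root_.seedStep B0 s ℓ).NegRel (_root_.seedStep B0' s' ℓ) where
  B_eq := by simp only [_root_.seedStep, h.B_eq, mutate_neg]
  C_eq := h.seedStep_C hℓ B0 B0'
  F_eq := h.seedStep_F B0 B0' ℓ

lemma foldl_seedStep {d : ι → R} (h : s.NegRel s') (hd : IsSkewSymmetrizer d s.B)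
    (B0 B0' : Matrix ι ι R) (p : List ι) :
    (p.foldl (_root_.seedStep B0) s).NegRel (p.foldl (_root_.seedStep B0') s') := by
  induction p generalizing s s' with
  | nil => exact h
  | cons ℓ p ih => exact ih (h.seedStep (hd.apply_self_eq_zero ℓ) B0 B0') (hd.mutate ℓ)

end SeedData.NegRel

lemma IsSkewSymmetrizer.negRel_seedOf_neg {d : ι → R} {B : Matrix ι ι R}
    (hd : IsSkewSymmetrizer d B) (p : List ι) : (seedOf B p).NegRel (seedOf (-B) p) :=
  SeedData.NegRel.foldl_seedStep (s := ⟨B, 1, 1, 0⟩) (s' := ⟨-B, 1, 1, 0⟩)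
    ⟨rfl, by simp, rfl⟩ hd B (-B) p

end NegInitialMatrix

lemma IsSkewSymmetrizable.exists_isSkewSymmetrizer {ι : Type} [Fintype ι] [DecidableEq ι]
    {B : Matrix ι ι ℤ} (hB : IsSkewSymmetrizable B) : ∃ d, IsSkewSymmetrizer d B := by
  obtain ⟨d, hd, hskew⟩ := hB
  refine ⟨d, hd, fun i j => ?_⟩
  have hij := congrFun (congrFun hskew j) i
  simp only [transpose_apply, Matrix.neg_apply, diagonal_mul] at hij
  exact hij

/-- `F^{-B;t_0}_t = F^{B;t_0}_t`. -/
theorem Fmat_neg_eq_Fmat {n : ℕ} (B : Matrix (Fin n) (Fin n) ℤ)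
    (hB : IsSkewSymmetrizable B) (p : List (Fin n)) :
    Fmat (-B) p = Fmat B p := by
  obtain ⟨d, hd⟩ := hB.exists_isSkewSymmetrizer
  exact (hd.negRel_seedOf_neg p).F_eq
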